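/- arXiv:1203.0431 — 2 statements merged into one kernel-verified Lean document; each statement's English description precedes it below -/
import Mathlib

section
/- With the notation above, E[f_1^3 − 3·f_2^3 + 2·f_3^3] = l(l−1)(l−2)·γ_b³. -/
/-!
Newton's identity `p₁³ - 3 p₂ p₁ + 2 p₃ = ∑_{i,j,k distinct} xᵢ xⱼ xₖ` turns the combination into a
sum over ordered triples of distinct indices. For distinct `i, j, k`,
`(b + εᵢ)(b + εⱼ)(b + εₖ) = b³ + b² εᵢ + (b + εᵢ) b εⱼ + (b + εᵢ)(b + εⱼ) εₖ`, and every term after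
`b³` is a function of variables independent of a centred `ε`, so it has mean zero. Each of the
`l (l - 1) (l - 2)` triples therefore contributes `E[b³]`.
-/

open MeasureTheory ProbabilityTheory Finset

section DistinctTriples

variable {ι : Type*} [Fintype ι] [DecidableEq ι]

theorem sum_distinct_triples_eq {R : Type*} [CommRing R] (x : ι → R) :
    ∑ i, ∑ j ∈ univ.erase i, ∑ k ∈ (univ.erase i).erase j, x i * x j * x k
      = (∑ i, x i) ^ 3 - 3 * (∑ i, x i ^ 2) * (∑ i, x i) + 2 * ∑ i, x i ^ 3 := by
  set S := ∑ i, x i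
  set Q := ∑ i, x i ^ 2
  have inner : ∀ i, ∑ j ∈ univ.erase i, ∑ k ∈ (univ.erase i).erase j, x i * x j * x k
      = S ^ 2 * x i - 2 * S * x i ^ 2 + 2 * x i ^ 3 - Q * x i := by
    intro i
    calc ∑ j ∈ univ.erase i, ∑ k ∈ (univ.erase i).erase j, x i * x j * x k
        = ∑ j ∈ univ.erase i, x i * (x j * (S - x i) - x j ^ 2) := by
          refine sum_congr rfl fun j hj => ?_
          rw [← mul_sum, sum_erase_eq_sub hj, sum_erase_eq_sub (mem_univ i)]
          ring
      _ = S ^ 2 * x i - 2 * S * x i ^ 2 + 2 * x i ^ 3 - Q * x i := by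
          rw [← mul_sum, sum_sub_distrib, ← sum_mul, sum_erase_eq_sub (mem_univ i),
            sum_erase_eq_sub (f := fun j => x j ^ 2) (mem_univ i)]
          ring
  rw [sum_congr rfl fun i _ => inner i]
  simp only [sum_sub_distrib, sum_add_distrib, ← mul_sum]
  ring

theorem integral_sum_distinct_triples {Ω : Type*} [MeasurableSpace Ω] {μ : Measure Ω}
    {X : ι → Ω → ℝ}
    (hint : ∀ i j k, Integrable (fun ω => X i ω * X j ω * X k ω) μ) {c : ℝ}
    (hc : ∀ i j k, i ≠ j → i ≠ k → j ≠ k → ∫ ω, X i ω * X j ω * X k ω ∂μ = c) :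
    ∫ ω, ∑ i, ∑ j ∈ univ.erase i, ∑ k ∈ (univ.erase i).erase j, X i ω * X j ω * X k ω ∂μ
      = Fintype.card ι * (Fintype.card ι - 1) * (Fintype.card ι - 2) * c := by
  calc _ = ∑ i, ∑ j ∈ univ.erase i, ∑ k ∈ (univ.erase i).erase j,
        ∫ ω, X i ω * X j ω * X k ω ∂μ := by
        rw [integral_finsetSum _ fun i _ =>
          integrable_finsetSum _ fun j _ => integrable_finsetSum _ fun k _ => hint i j k]
        refine sum_congr rfl fun i _ => ?_
        rw [integral_finsetSum _ fun j _ => integrable_finsetSum _ fun k _ => hint i j k]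
        exact sum_congr rfl fun j _ => integral_finsetSum _ fun k _ => hint i j k
    _ = (∑ i : ι, ∑ j ∈ univ.erase i, ∑ k ∈ (univ.erase i).erase j, (1 : ℝ) * 1 * 1) * c := by
        simp only [sum_mul]
        refine sum_congr rfl fun i _ => sum_congr rfl fun j hj => sum_congr rfl fun k hk => ?_
        rw [hc i j k (ne_of_mem_erase hj).symm (ne_of_mem_erase (mem_of_mem_erase hk)).symm
          (ne_of_mem_erase hk).symm, one_mul, one_mul, one_mul]
    _ = _ := by
        rw [sum_distinct_triples_eq (fun _ => (1 : ℝ))]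
        simp only [one_pow, sum_const, card_univ, nsmul_eq_mul, mul_one]
        ring

end DistinctTriples

section Moments

variable {Ω : Type*} [MeasurableSpace Ω] {μ : Measure Ω}

theorem memLp_three_of_integrable_pow_three {f : Ω → ℝ} (hf : AEStronglyMeasurable f μ)
    (h3 : Integrable (fun ω => f ω ^ 3) μ) : MemLp f 3 μ := by
  rw [← integrable_norm_rpow_iff hf (by norm_num) (by norm_num)]
  simpa using h3.norm

theorem MeasureTheory.MemLp.integrable_mul_mul {f g h : Ω → ℝ} (hf : MemLp f 3 μ)
    (hg : MemLp g 3 μ) (hh : MemLp h 3 μ) : Integrable (fun ω => f ω * g ω * h ω) μ := by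
  refine Integrable.mono' (((hf.integrable_norm_pow three_ne_zero).add
    (hg.integrable_norm_pow three_ne_zero)).add (hh.integrable_norm_pow three_ne_zero))
    ((hf.1.mul hg.1).mul hh.1) (ae_of_all _ fun ω => ?_)
  have amgm : ∀ a b c : ℝ, 0 ≤ a → 0 ≤ b → 0 ≤ c → a * b * c ≤ a ^ 3 + b ^ 3 + c ^ 3 := by
    intro a b c ha hb hc
    nlinarith [mul_nonneg ha (sq_nonneg (b - c)), mul_nonneg hb (sq_nonneg (a - c)),
      mul_nonneg hc (sq_nonneg (a - b)), mul_nonneg (mul_nonneg ha hb) hc]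
  simpa only [norm_mul, Pi.add_apply] using
    amgm _ _ _ (norm_nonneg (f ω)) (norm_nonneg (g ω)) (norm_nonneg (h ω))

end Moments

theorem ProbabilityTheory.iIndepFun.integral_mul_eq_zero_of_notMem {Ω ι : Type*}
    [MeasurableSpace Ω] {μ : Measure Ω} {Y : ι → Ω → ℝ} (hY : iIndepFun Y μ)
    (hmeas : ∀ i, Measurable (Y i))
    {S : Finset ι} {r : ι} (hr : r ∉ S) {φ : (S → ℝ) → ℝ} (hφ : Measurable φ)
    (hmean : ∫ ω, Y r ω ∂μ = 0) :
    ∫ ω, φ (fun s : S => Y s ω) * Y r ω ∂μ = 0 := by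
  have hindep := (hY.indepFun_finset S {r} (disjoint_singleton_right.2 hr) hmeas).comp hφ
    (measurable_pi_apply ⟨r, mem_singleton_self r⟩)
  calc _ = (∫ ω, φ (fun s : S => Y s ω) ∂μ) * ∫ ω, Y r ω ∂μ :=
        hindep.integral_fun_mul_eq_mul_integral
          (hφ.comp (measurable_pi_lambda _ fun s => hmeas s)).aestronglyMeasurable
          (hmeas r).aestronglyMeasurable
    _ = 0 := by rw [hmean, mul_zero]

section CommonShock

variable {Ω ι : Type*} [MeasurableSpace Ω] {μ : Measure Ω} {b : Ω → ℝ} {ε : ι → Ω → ℝ}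

theorem integral_mul_mul_add_common_eq_integral_pow_three (hb : Measurable b)
    (hε : ∀ j, Measurable (ε j))
    (hindep : iIndepFun (fun o : Option ι => Option.elim o b ε) μ)
    (hεmean : ∀ j, ∫ ω, ε j ω ∂μ = 0) (hb3 : MemLp b 3 μ) (hε3 : ∀ j, MemLp (ε j) 3 μ)
    {i j k : ι} (hij : i ≠ j) (hik : i ≠ k) (hjk : j ≠ k) :
    ∫ ω, (b ω + ε i ω) * (b ω + ε j ω) * (b ω + ε k ω) ∂μ = ∫ ω, b ω ^ 3 ∂μ := by
  classical
  have hY : ∀ o, Measurable (Option.elim o b ε) := by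
    rintro (_ | j)
    exacts [hb, hε j]
  have h1 : ∫ ω, b ω * b ω * ε i ω ∂μ = 0 :=
    hindep.integral_mul_eq_zero_of_notMem hY (S := {none}) (r := some i) (by simp)
      (φ := fun v => v ⟨none, by simp⟩ * v ⟨none, by simp⟩) (by fun_prop) (hεmean i)
  have h2 : ∫ ω, (b ω + ε i ω) * b ω * ε j ω ∂μ = 0 :=
    hindep.integral_mul_eq_zero_of_notMem hY (S := {none, some i}) (r := some j)
      (by simp [hij.symm])
      (φ := fun v => (v ⟨none, by simp⟩ + v ⟨some i, by simp⟩) * v ⟨none, by simp⟩)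
      (by fun_prop) (hεmean j)
  have h3 : ∫ ω, (b ω + ε i ω) * (b ω + ε j ω) * ε k ω ∂μ = 0 :=
    hindep.integral_mul_eq_zero_of_notMem hY (S := {none, some i, some j}) (r := some k)
      (by simp [hik.symm, hjk.symm])
      (φ := fun v => (v ⟨none, by simp⟩ + v ⟨some i, by simp⟩)
        * (v ⟨none, by simp⟩ + v ⟨some j, by simp⟩)) (by fun_prop) (hεmean k)
  have hbbb := hb3.integrable_mul_mul hb3 hb3
  have hbbε := hb3.integrable_mul_mul hb3 (hε3 i)
  have he3 : ∀ j, MemLp (fun ω => b ω + ε j ω) 3 μ := fun j => hb3.add (hε3 j)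
  have hebε := (he3 i).integrable_mul_mul hb3 (hε3 j)
  have heeε := (he3 i).integrable_mul_mul (he3 j) (hε3 k)
  calc ∫ ω, (b ω + ε i ω) * (b ω + ε j ω) * (b ω + ε k ω) ∂μ
      = ∫ ω, b ω * b ω * b ω + b ω * b ω * ε i ω + (b ω + ε i ω) * b ω * ε j ω
          + (b ω + ε i ω) * (b ω + ε j ω) * ε k ω ∂μ := by
        congr 1; ext ω; ring
    _ = ∫ ω, b ω ^ 3 ∂μ := by
        rw [integral_add ((hbbb.fun_add hbbε).fun_add hebε) heeε,
          integral_add (hbbb.fun_add hbbε) hebε, integral_add hbbb hbbε, h1, h2, h3]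
        simp only [add_zero, pow_three, mul_assoc]

end CommonShock

theorem third_moment_b_combination_general
    {l : ℕ}
    {Ω : Type*} [MeasureSpace Ω]
    (b : Ω → ℝ) (ε : Fin l → Ω → ℝ)
    (hbmeas : Measurable b) (hεmeas : ∀ j, Measurable (ε j))
    (hindep : ProbabilityTheory.iIndepFun
      (fun i : Option (Fin l) => Option.elim i b ε) ℙ)
    (hεmean : ∀ j, ∫ ω, ε j ω = 0)
    (hεint3 : ∀ j, Integrable (fun ω => (ε j ω) ^ 3) ℙ)
    (hbint3 : Integrable (fun ω => (b ω) ^ 3) ℙ)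
    (γb3 : ℝ)
    (hb3 : ∫ ω, (b ω) ^ 3 = γb3) :
    ∫ ω, ((∑ j, (b ω + ε j ω)) ^ 3
        - 3 * (∑ j, (b ω + ε j ω) ^ 2) * (∑ j, (b ω + ε j ω))
        + 2 * ∑ j, (b ω + ε j ω) ^ 3)
      = (l : ℝ) * ((l : ℝ) - 1) * ((l : ℝ) - 2) * γb3 := by
  have hbL := memLp_three_of_integrable_pow_three hbmeas.aestronglyMeasurable hbint3
  have hεL j := memLp_three_of_integrable_pow_three (hεmeas j).aestronglyMeasurable (hεint3 j)
  have heL : ∀ j, MemLp (fun ω => b ω + ε j ω) 3 ℙ := fun j => hbL.add (hεL j)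
  simp_rw [← sum_distinct_triples_eq]
  rw [integral_sum_distinct_triples (fun i j k => (heL i).integrable_mul_mul (heL j) (heL k))
    fun i j k hij hik hjk =>
      integral_mul_mul_add_common_eq_integral_pow_three hbmeas hεmeas hindep hεmean hbL hεL
        hij hik hjk, hb3, Fintype.card_fin]

theorem third_moment_b_combination
    {l : ℕ} (hl : 3 ≤ l)
    {Ω : Type*} [MeasureSpace Ω] [IsProbabilityMeasure (ℙ : Measure Ω)]
    (b : Ω → ℝ) (ε : Fin l → Ω → ℝ)
    (hbmeas : Measurable b) (hεmeas : ∀ j, Measurable (ε j))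
    (hindep : ProbabilityTheory.iIndepFun
      (fun i : Option (Fin l) => Option.elim i b ε) ℙ)
    (hident : ∀ j j' : Fin l, Measure.map (ε j) ℙ = Measure.map (ε j') ℙ)
    (hεmean : ∀ j, ∫ ω, ε j ω = 0)
    (hεint3 : ∀ j, Integrable (fun ω => (ε j ω) ^ 3) ℙ)
    (hbint3 : Integrable (fun ω => (b ω) ^ 3) ℙ)
    (γb3 : ℝ)
    (hbmean : ∫ ω, b ω = 0)
    (hb3 : ∫ ω, (b ω) ^ 3 = γb3) :
    ∫ ω, ((∑ j, (b ω + ε j ω)) ^ 3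
        - 3 * (∑ j, (b ω + ε j ω) ^ 2) * (∑ j, (b ω + ε j ω))
        + 2 * ∑ j, (b ω + ε j ω) ^ 3)
      = (l : ℝ) * ((l : ℝ) - 1) * ((l : ℝ) - 2) * γb3 :=
  third_moment_b_combination_general b ε hbmeas hεmeas hindep hεmean hεint3 hbint3 γb3 hb3
end

section
/- With f_m^4 (m = 1,...,4) and f_5^4 = (Σ_j e_j²)² as above, E[(l² − 2l + 3)(l·f_4^4 − 4·f_3^4) + 6l·f_2^4 − 3·f_1^4 − 3(2l − 3)·f_5^4] = l(l−1)(l−2)(l−3)·γ_ε⁴. -/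
/-! The combination is a polynomial in the power sums that is invariant under a common shift
`e_j ↦ x + e_j`, so `b` drops out and only the `ε_j` remain. Writing `∑ k, ε_k = ε_j + R_j` with
`R_j` independent of `ε_j`, the combination becomes a sum over `j` of polynomials in `ε_j`, `R_j`
and `∑ k, ε_k²`, whose expectations involve only `E ε_j⁴` and the products `E ε_j² E ε_k²`
(`j ≠ k`). The coefficients are chosen so that the latter cancel, leaving
`(l - 1)(l - 2)(l - 3) E ε_j⁴` for each `j`. -/

open MeasureTheory ProbabilityTheory Finset

section Moments

variable {Ω : Type*} [MeasurableSpace Ω] {μ : Measure Ω}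

lemma MeasureTheory.MemLp.integrable_pow [IsFiniteMeasure μ] {f : Ω → ℝ} {p : ℕ}
    (hf : MemLp f p μ) {k : ℕ} (hk : k ≤ p) : Integrable (fun ω => f ω ^ k) μ := by
  have hfk : MemLp f k μ := hf.mono_exponent (by exact_mod_cast hk)
  refine (integrable_norm_iff (hf.aestronglyMeasurable.pow k)).mp ?_
  simpa only [Pi.pow_apply, norm_pow] using hfk.integrable_norm_pow'

lemma MeasureTheory.memLp_of_integrable_pow {f : Ω → ℝ} {p : ℕ} (hp : p ≠ 0) (heven : Even p)
    (hf : AEStronglyMeasurable f μ) (hfp : Integrable (fun ω => f ω ^ p) μ) :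
    MemLp f p μ := by
  refine (integrable_norm_rpow_iff hf (by exact_mod_cast hp) (by simp)).mp ?_
  simpa only [ENNReal.toReal_natCast, Real.rpow_natCast, Real.norm_eq_abs, heven.pow_abs]
    using hfp

lemma pow_mul_add_pow_eq_sum {R : Type*} [CommSemiring R] (x y : R) (a c : ℕ) :
    x ^ a * (x + y) ^ c = ∑ m ∈ range (c + 1), x ^ (a + m) * y ^ (c - m) * c.choose m := by
  simp only [add_pow, mul_sum, pow_add, mul_assoc]

namespace ProbabilityTheory.IndepFun

variable {X Y : Ω → ℝ}

lemma integral_pow_mul_pow (hXY : IndepFun X Y μ) (hX : AEMeasurable X μ)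
    (hY : AEMeasurable Y μ) (a c : ℕ) :
    ∫ ω, X ω ^ a * Y ω ^ c ∂μ = (∫ ω, X ω ^ a ∂μ) * ∫ ω, Y ω ^ c ∂μ :=
  (hXY.comp (measurable_id.pow_const a)
    (measurable_id.pow_const c)).integral_fun_mul_eq_mul_integral
      (hX.pow_const a).aestronglyMeasurable (hY.pow_const c).aestronglyMeasurable

variable [IsFiniteMeasure μ] {p : ℕ}

lemma integrable_pow_mul_pow (hXY : IndepFun X Y μ) (hX : MemLp X p μ) (hY : MemLp Y p μ)
    {a c : ℕ} (ha : a ≤ p) (hc : c ≤ p) : Integrable (fun ω => X ω ^ a * Y ω ^ c) μ :=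
  (hXY.comp (measurable_id.pow_const a) (measurable_id.pow_const c)).integrable_mul
    (hX.integrable_pow ha) (hY.integrable_pow hc)

lemma integrable_pow_mul_add_pow (hXY : IndepFun X Y μ) (hX : MemLp X p μ) (hY : MemLp Y p μ)
    {a c : ℕ} (hac : a + c ≤ p) : Integrable (fun ω => X ω ^ a * (X ω + Y ω) ^ c) μ := by
  simp only [pow_mul_add_pow_eq_sum]
  exact integrable_finsetSum _ fun m hm =>
    (hXY.integrable_pow_mul_pow hX hY (by grind) (by omega)).mul_const _

lemma integral_pow_mul_add_pow (hXY : IndepFun X Y μ) (hX : MemLp X p μ) (hY : MemLp Y p μ)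
    {a c : ℕ} (hac : a + c ≤ p) :
    ∫ ω, X ω ^ a * (X ω + Y ω) ^ c ∂μ
      = ∑ m ∈ range (c + 1), (∫ ω, X ω ^ (a + m) ∂μ) * (∫ ω, Y ω ^ (c - m) ∂μ) * c.choose m := by
  simp only [pow_mul_add_pow_eq_sum]
  rw [integral_finsetSum _ fun m hm =>
    (hXY.integrable_pow_mul_pow hX hY (by grind) (by omega)).mul_const _]
  refine sum_congr rfl fun m _ => ?_
  rw [integral_mul_const, hXY.integral_pow_mul_pow hX.aemeasurable hY.aemeasurable]

end ProbabilityTheory.IndepFun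

namespace ProbabilityTheory.iIndepFun

variable {ι : Type*} {X : ι → Ω → ℝ}

lemma integral_sum_sq [IsFiniteMeasure μ] (hX : iIndepFun X μ)
    (hX2 : ∀ i, MemLp (X i) 2 μ) (hX0 : ∀ i, ∫ ω, X i ω ∂μ = 0) (s : Finset ι) :
    ∫ ω, (∑ i ∈ s, X i ω) ^ 2 ∂μ = ∑ i ∈ s, ∫ ω, X i ω ^ 2 ∂μ := by
  have hsum0 : ∫ ω, (∑ i ∈ s, X i) ω ∂μ = 0 := by
    simp only [Finset.sum_apply]
    rw [integral_finsetSum _ fun i _ => (hX2 i).integrable one_le_two]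
    exact sum_eq_zero fun i _ => hX0 i
  have hvar := IndepFun.variance_sum (s := s) (fun i _ => hX2 i)
    fun i _ k _ hik => hX.indepFun hik
  rw [variance_of_integral_eq_zero (memLp_finsetSum' s fun i _ => hX2 i).aemeasurable hsum0,
    sum_congr rfl fun i _ => variance_of_integral_eq_zero (hX2 i).aemeasurable (hX0 i)] at hvar
  simpa only [Finset.sum_apply] using hvar

lemma integrable_sq_mul_sq [IsFiniteMeasure μ] (hX : iIndepFun X μ)
    (hX4 : ∀ i, MemLp (X i) 4 μ) (i j : ι) :
    Integrable (fun ω => X j ω ^ 2 * X i ω ^ 2) μ := by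
  obtain rfl | hij := eq_or_ne i j
  · simpa only [← pow_add] using (hX4 i).integrable_pow le_rfl
  · exact (hX.indepFun hij.symm).integrable_pow_mul_pow (hX4 j) (hX4 i) (by norm_num) (by norm_num)

variable [Fintype ι] [DecidableEq ι]

lemma indepFun_sum_erase (hX : iIndepFun X μ) (hXm : ∀ i, AEMeasurable (X i) μ) (j : ι) :
    IndepFun (X j) (fun ω => ∑ i ∈ univ.erase j, X i ω) μ := by
  simpa only [Finset.sum_fn] using
    (hX.indepFun_finsetSum_of_notMem₀ hXm (notMem_erase j univ)).symm

variable [IsFiniteMeasure μ] {p : ℕ}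

lemma integrable_pow_mul_sum_pow (hX : iIndepFun X μ) (hXp : ∀ i, MemLp (X i) p μ) (j : ι)
    {a c : ℕ} (hac : a + c ≤ p) : Integrable (fun ω => X j ω ^ a * (∑ i, X i ω) ^ c) μ := by
  simp only [← add_sum_erase univ _ (mem_univ j)]
  exact (hX.indepFun_sum_erase (fun i => (hXp i).aemeasurable) j).integrable_pow_mul_add_pow
    (hXp j) (memLp_finsetSum _ fun i _ => hXp i) hac

lemma integral_pow_mul_sum_pow (hX : iIndepFun X μ) (hXp : ∀ i, MemLp (X i) p μ) (j : ι)
    {a c : ℕ} (hac : a + c ≤ p) :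
    ∫ ω, X j ω ^ a * (∑ i, X i ω) ^ c ∂μ
      = ∑ m ∈ range (c + 1), (∫ ω, X j ω ^ (a + m) ∂μ)
          * (∫ ω, (∑ i ∈ univ.erase j, X i ω) ^ (c - m) ∂μ) * c.choose m := by
  simp only [← add_sum_erase univ _ (mem_univ j)]
  exact (hX.indepFun_sum_erase (fun i => (hXp i).aemeasurable) j).integral_pow_mul_add_pow
    (hXp j) (memLp_finsetSum _ fun i _ => hXp i) hac

lemma integral_sq_mul_sum_sq (hX : iIndepFun X μ) (hX4 : ∀ i, MemLp (X i) 4 μ) (j : ι) :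
    ∫ ω, X j ω ^ 2 * ∑ i, X i ω ^ 2 ∂μ
      = ∫ ω, X j ω ^ 4 ∂μ + (∫ ω, X j ω ^ 2 ∂μ) * ∑ i ∈ univ.erase j, ∫ ω, X i ω ^ 2 ∂μ := by
  simp only [mul_sum]
  rw [integral_finsetSum _ fun i _ => hX.integrable_sq_mul_sq hX4 i j,
    ← add_sum_erase univ _ (mem_univ j)]
  congr 1
  · simp only [← pow_add]
  · refine sum_congr rfl fun i hi => ?_
    exact (hX.indepFun (ne_of_mem_erase hi).symm).integral_pow_mul_pow
      (hX4 j).aemeasurable (hX4 i).aemeasurable 2 2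

end ProbabilityTheory.iIndepFun

end Moments

section Combination

variable {ι : Type*} [Fintype ι]

/-- With `n = card ι` and the paper's `f_m⁴`, this is
`(n² - 2n + 3)(n f_4⁴ - 4 f_3⁴) + 6n f_2⁴ - 3 f_1⁴ - 3(2n - 3) f_5⁴`. -/
def fourthMomentCombination (e : ι → ℝ) : ℝ :=
  ((Fintype.card ι : ℝ) ^ 2 - 2 * Fintype.card ι + 3)
      * (Fintype.card ι * ∑ j, e j ^ 4 - 4 * (∑ j, e j ^ 3) * ∑ j, e j)
    + 6 * Fintype.card ι * (∑ j, e j ^ 2) * (∑ j, e j) ^ 2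
    - 3 * (∑ j, e j) ^ 4
    - 3 * (2 * Fintype.card ι - 3) * (∑ j, e j ^ 2) ^ 2

def fourthMomentSummand (e : ι → ℝ) (j : ι) : ℝ :=
  ((Fintype.card ι : ℝ) ^ 2 - 2 * Fintype.card ι + 3)
      * (Fintype.card ι * e j ^ 4 - 4 * (e j ^ 3 * ∑ i, e i))
    + 6 * Fintype.card ι * (e j ^ 2 * (∑ i, e i) ^ 2)
    - 3 * (e j * (∑ i, e i) ^ 3)
    - 3 * (2 * Fintype.card ι - 3) * (e j ^ 2 * ∑ i, e i ^ 2)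

lemma fourthMomentCombination_eq_sum (e : ι → ℝ) :
    fourthMomentCombination e = ∑ j, fourthMomentSummand e j := by
  simp only [fourthMomentCombination, fourthMomentSummand, sum_add_distrib, sum_sub_distrib,
    ← mul_sum, ← sum_mul]
  ring

lemma sum_const_add_pow {R : Type*} [CommSemiring R] (x : R) (e : ι → R) (p : ℕ) :
    ∑ j, (x + e j) ^ p = ∑ m ∈ range (p + 1), x ^ m * (∑ j, e j ^ (p - m)) * p.choose m := by
  simp only [add_pow, sum_comm (s := univ), mul_sum, sum_mul]

lemma fourthMomentCombination_const_add (x : ℝ) (e : ι → ℝ) :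
    fourthMomentCombination (fun j => x + e j) = fourthMomentCombination e := by
  simp only [fourthMomentCombination, sum_const_add_pow, sum_add_distrib, sum_range_succ,
    sum_range_zero, pow_zero, sum_const, card_univ, nsmul_eq_mul]
  norm_num [Nat.choose]
  ring

variable [DecidableEq ι] {Ω : Type*} [MeasurableSpace Ω] {μ : Measure Ω} {X : ι → Ω → ℝ}

lemma integrable_fourthMomentSummand [IsFiniteMeasure μ] (hX : iIndepFun X μ)
    (hX4 : ∀ i, MemLp (X i) 4 μ) (j : ι) :
    Integrable (fun ω => fourthMomentSummand (fun i => X i ω) j) μ := by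
  have h4 := (hX4 j).integrable_pow le_rfl
  have h31 := hX.integrable_pow_mul_sum_pow hX4 j (a := 3) (c := 1) le_rfl
  have h22 := hX.integrable_pow_mul_sum_pow hX4 j (a := 2) (c := 2) le_rfl
  have h13 := hX.integrable_pow_mul_sum_pow hX4 j (a := 1) (c := 3) le_rfl
  have h2S := integrable_finsetSum univ fun i _ => hX.integrable_sq_mul_sq hX4 i j
  simp only [pow_one, ← mul_sum] at h31 h13 h2S
  unfold fourthMomentSummand
  fun_prop

lemma integral_fourthMomentSummand [IsProbabilityMeasure μ] (hX : iIndepFun X μ)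
    (hX4 : ∀ i, MemLp (X i) 4 μ) (hX0 : ∀ i, ∫ ω, X i ω ∂μ = 0) (j : ι) :
    ∫ ω, fourthMomentSummand (fun i => X i ω) j ∂μ
      = ((Fintype.card ι : ℝ) - 1) * (Fintype.card ι - 2) * (Fintype.card ι - 3)
          * ∫ ω, X j ω ^ 4 ∂μ := by
  have i4 := (hX4 j).integrable_pow le_rfl
  have i31 := hX.integrable_pow_mul_sum_pow hX4 j (a := 3) (c := 1) le_rfl
  have i22 := hX.integrable_pow_mul_sum_pow hX4 j (a := 2) (c := 2) le_rfl
  have i13 := hX.integrable_pow_mul_sum_pow hX4 j (a := 1) (c := 3) le_rfl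
  have i2S := integrable_finsetSum univ fun i _ => hX.integrable_sq_mul_sq hX4 i j
  have h31 := hX.integral_pow_mul_sum_pow hX4 j (a := 3) (c := 1) le_rfl
  have h13 := hX.integral_pow_mul_sum_pow hX4 j (a := 1) (c := 3) le_rfl
  simp only [pow_one, ← mul_sum] at i31 i13 i2S h31 h13
  have hR0 : ∫ ω, (∑ i ∈ univ.erase j, X i ω) ^ 0 ∂μ = 1 := by simp
  have hR1 : ∫ ω, (∑ i ∈ univ.erase j, X i ω) ^ 1 ∂μ = 0 := by
    simp only [pow_one]
    rw [integral_finsetSum _ fun i _ => (hX4 i).integrable (by norm_num)]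
    exact sum_eq_zero fun i _ => hX0 i
  have hR2 := hX.integral_sum_sq (fun i => (hX4 i).mono_exponent (by norm_num)) hX0 (univ.erase j)
  have hXj1 : ∫ ω, X j ω ^ 1 ∂μ = 0 := by simpa using hX0 j
  unfold fourthMomentSummand
  simp (disch := fun_prop) only [integral_add, integral_sub, integral_const_mul]
  rw [h31, hX.integral_pow_mul_sum_pow hX4 j (a := 2) (c := 2) le_rfl, h13,
    hX.integral_sq_mul_sum_sq hX4 j]
  -- with `R_j = ∑ i ∈ univ.erase j, X i`, the products `E X_j² E R_j²` enter with total
  -- coefficient `6n - 9 - 3(2n - 3) = 0`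
  norm_num only [sum_range_succ, sum_range_zero, Nat.choose, hR0, hR1, hR2, hXj1]
  ring

theorem integral_fourthMomentCombination [IsProbabilityMeasure μ] (hX : iIndepFun X μ)
    (hX4 : ∀ i, MemLp (X i) 4 μ) (hX0 : ∀ i, ∫ ω, X i ω ∂μ = 0) :
    ∫ ω, fourthMomentCombination (fun i => X i ω) ∂μ
      = ((Fintype.card ι : ℝ) - 1) * (Fintype.card ι - 2) * (Fintype.card ι - 3)
          * ∑ i, ∫ ω, X i ω ^ 4 ∂μ := by
  simp only [fourthMomentCombination_eq_sum]
  rw [integral_finsetSum _ fun j _ => integrable_fourthMomentSummand hX hX4 j, mul_sum]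
  exact sum_congr rfl fun j _ => integral_fourthMomentSummand hX hX4 hX0 j

end Combination

theorem fourth_moment_eps_combination_general
    {l : ℕ}
    {Ω : Type*} [MeasureSpace Ω] [IsProbabilityMeasure (ℙ : Measure Ω)]
    (b : Ω → ℝ) (ε : Fin l → Ω → ℝ)
    (hεmeas : ∀ j, Measurable (ε j))
    (hindep : ProbabilityTheory.iIndepFun
      (fun i : Option (Fin l) => Option.elim i b ε) ℙ)
    (hεmean : ∀ j, ∫ ω, ε j ω = 0)
    (hεint4 : ∀ j, Integrable (fun ω => (ε j ω) ^ 4) ℙ)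
    (γε4 : ℝ)
    (hε4 : ∀ j, ∫ ω, (ε j ω) ^ 4 = γε4) :
    ∫ ω, (((l : ℝ) ^ 2 - 2 * (l : ℝ) + 3)
            * ((l : ℝ) * ∑ j, (b ω + ε j ω) ^ 4
               - 4 * (∑ j, (b ω + ε j ω) ^ 3) * (∑ j, (b ω + ε j ω)))
          + 6 * (l : ℝ) * (∑ j, (b ω + ε j ω) ^ 2) * (∑ j, (b ω + ε j ω)) ^ 2
          - 3 * (∑ j, (b ω + ε j ω)) ^ 4
          - 3 * (2 * (l : ℝ) - 3) * (∑ j, (b ω + ε j ω) ^ 2) ^ 2)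
      = (l : ℝ) * ((l : ℝ) - 1) * ((l : ℝ) - 2) * ((l : ℝ) - 3) * γε4 := by
  have hε : iIndepFun ε ℙ := hindep.precomp (g := some) (Option.some_injective _)
  have hε4L : ∀ j, MemLp (ε j) 4 ℙ := fun j =>
    memLp_of_integrable_pow four_ne_zero (by decide) (hεmeas j).aestronglyMeasurable (hεint4 j)
  calc _ = ∫ ω, fourthMomentCombination (fun j => b ω + ε j ω) := by
        simp only [fourthMomentCombination, Fintype.card_fin]
    _ = ∫ ω, fourthMomentCombination (fun j => ε j ω) := by
        simp only [fourthMomentCombination_const_add]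
    _ = ((l : ℝ) - 1) * (l - 2) * (l - 3) * ∑ j, ∫ ω, ε j ω ^ 4 := by
        simpa only [Fintype.card_fin] using integral_fourthMomentCombination hε hε4L hεmean
    _ = _ := by
        simp only [hε4, sum_const, card_univ, Fintype.card_fin, nsmul_eq_mul]
        ring

/-- the combination of f_1^4,...,f_5^4 isolating the fourth moment of ε. -/
theorem fourth_moment_eps_combination
    {l : ℕ} (hl : 4 ≤ l)
    {Ω : Type*} [MeasureSpace Ω] [IsProbabilityMeasure (ℙ : Measure Ω)]
    (b : Ω → ℝ) (ε : Fin l → Ω → ℝ)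
    (hbmeas : Measurable b) (hεmeas : ∀ j, Measurable (ε j))
    (hindep : ProbabilityTheory.iIndepFun
      (fun i : Option (Fin l) => Option.elim i b ε) ℙ)
    (hident : ∀ j j' : Fin l, Measure.map (ε j) ℙ = Measure.map (ε j') ℙ)
    (hεmean : ∀ j, ∫ ω, ε j ω = 0)
    (hεint4 : ∀ j, Integrable (fun ω => (ε j ω) ^ 4) ℙ)
    (hbint4 : Integrable (fun ω => (b ω) ^ 4) ℙ)
    (hbmean : ∫ ω, b ω = 0)
    (γε4 : ℝ)
    (hε4 : ∀ j, ∫ ω, (ε j ω) ^ 4 = γε4) :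
    ∫ ω, (((l : ℝ) ^ 2 - 2 * (l : ℝ) + 3)
            * ((l : ℝ) * ∑ j, (b ω + ε j ω) ^ 4
               - 4 * (∑ j, (b ω + ε j ω) ^ 3) * (∑ j, (b ω + ε j ω)))
          + 6 * (l : ℝ) * (∑ j, (b ω + ε j ω) ^ 2) * (∑ j, (b ω + ε j ω)) ^ 2
          - 3 * (∑ j, (b ω + ε j ω)) ^ 4
          - 3 * (2 * (l : ℝ) - 3) * (∑ j, (b ω + ε j ω) ^ 2) ^ 2)
      = (l : ℝ) * ((l : ℝ) - 1) * ((l : ℝ) - 2) * ((l : ℝ) - 3) * γε4 :=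
  fourth_moment_eps_combination_general b ε hεmeas hindep hεmean hεint4 γε4 hε4
end
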